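/- Assume the Setup (Section 7.2) with G a finite group, let p = [G : P] and q = [G : Q], and suppose Z ⊆ α intersects both A and x • β. Then p·|A|_Z = |G| and q·(|x • β|_Z − |x • B|_Z) ≥ |G|, where |X|_Z = Σ_{g ∈ G} |X|*_{g • Z}. -/

import Mathlib

open Pointwise

open scoped Classical

/-- `sep X Z` is the indicator `|X|*_Z`: it is `1` if `X` separates `Z`
(i.e. `Z` meets both `X` and its complement) and `0` otherwise. -/
noncomputable def sep {E : Type*} (X Z : Set E) : ℕ :=
  if (Z ∩ X).Nonempty ∧ (Z ∩ Xᶜ).Nonempty then 1 else 0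

/-!
A translate `g • Z` of a set `Z ⊆ α` can only meet `α` when `g` stabilizes `α`, by the edge
property. Since `A` is `P`-invariant, `|A|*_{g • Z}` is therefore `|A|*_Z = 1` for `g ∈ P` and `0`
otherwise, so `|A|_Z = |P|`. For the second sum, conjugating by `x` turns it into a sum over
translates of `W = x⁻¹ • Z`, which is separated by `β` and misses `B`; for `h ∈ Q` the term
`|β|*_{h • W} - |B|*_{h • W}` is `1`, and for `h ∉ Q` it is nonnegative because `h • W ⊄ β`.
-/

section

variable {G E : Type*} [Group G] [MulAction G E]

open MulAction

variable (G) in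
def IsEdgeSet (α : Set E) : Prop :=
  ∀ y : G, (α ∩ y • α).Nonempty → y • α = α

lemma sep_eq_one_iff {X Z : Set E} :
    sep X Z = 1 ↔ (Z ∩ X).Nonempty ∧ (Z ∩ Xᶜ).Nonempty := by
  unfold sep; split_ifs with h <;> simp [h]

lemma sep_eq_zero_of_disjoint {X Z : Set E} (h : Disjoint Z X) : sep X Z = 0 :=
  if_neg fun hsep => hsep.1.ne_empty (Set.disjoint_iff_inter_eq_empty.1 h)

lemma sep_le_sep_of_subset {X Y Z : Set E} (hXY : X ⊆ Y) (hZ : ¬ Z ⊆ Y) :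
    sep X Z ≤ sep Y Z := by
  unfold sep
  split_ifs with hX hY <;> try omega
  obtain ⟨z, hzZ, hzY⟩ := Set.not_subset.1 hZ
  exact absurd ⟨hX.1.mono (Set.inter_subset_inter_right Z hXY), ⟨z, hzZ, hzY⟩⟩ hY

lemma sep_smul_smul (g : G) (X Z : Set E) : sep (g • X) (g • Z) = sep X Z := by
  simp only [sep, ← Set.smul_set_inter, ← Set.smul_set_compl, Set.smul_set_nonempty]

lemma sep_smul_of_mem_stabilizer {g : G} {X : Set E} (hg : g ∈ stabilizer G X) (Z : Set E) :
    sep X (g • Z) = sep X Z := by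
  conv_lhs => rw [← mem_stabilizer_iff.1 hg]
  exact sep_smul_smul g X Z

lemma sep_smul_conj_smul (x h : G) (X Z : Set E) :
    sep (x • X) ((x * h * x⁻¹) • Z) = sep X (h • x⁻¹ • Z) := by
  rw [mul_smul, mul_smul, sep_smul_smul]

lemma sum_sep_smul_eq_sum_sep_conj [Fintype G] (x : G) (X Z : Set E) :
    ∑ g : G, (sep (x • X) (g • Z) : ℤ) = ∑ h : G, (sep X (h • x⁻¹ • Z) : ℤ) := by
  rw [← (MulAut.conj x).toEquiv.sum_comp]
  simp only [MulEquiv.toEquiv_eq_coe, MulEquiv.coe_toEquiv, MulAut.conj_apply,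
    sep_smul_conj_smul]

lemma mem_stabilizer_biUnion_smul (H : Subgroup G) (S : Set E) {h : G} (hh : h ∈ H) :
    h ∈ stabilizer G (⋃ g ∈ H, g • S) := by
  rw [mem_stabilizer_iff, Set.smul_set_iUnion₂]
  refine subset_antisymm (Set.iUnion₂_subset fun g hg => ?_) (Set.iUnion₂_subset fun g hg => ?_)
  · rw [smul_smul]
    exact Set.subset_biUnion_of_mem (u := fun g : G => g • S) (H.mul_mem hh hg)
  · rw [show g • S = h • (h⁻¹ * g) • S by rw [smul_smul, mul_inv_cancel_left]]
    exact Set.subset_biUnion_of_mem (u := fun g : G => h • g • S) (H.mul_mem (H.inv_mem hh) hg)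

lemma sdiff_mem_stabilizer {g : G} {s t : Set E} (hs : g ∈ stabilizer G s)
    (ht : g ∈ stabilizer G t) : g ∈ stabilizer G (s \ t) := by
  rw [mem_stabilizer_iff] at *
  rw [Set.smul_set_sdiff, hs, ht]

lemma sum_ite_mem_subgroup [Fintype G] {R : Type*} [AddCommMonoidWithOne R] (H : Subgroup G)
    [DecidablePred (· ∈ H)] :
    ∑ g : G, (if g ∈ H then 1 else 0 : R) = Nat.card H := by
  rw [Finset.sum_boole, ← Fintype.card_subtype, Nat.card_eq_fintype_card]

namespace IsEdgeSet

variable {α W : Set E}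

lemma disjoint_smul (hα : IsEdgeSet G α) {g : G} (hg : g ∉ stabilizer G α) :
    Disjoint α (g • α) :=
  Set.disjoint_iff_inter_eq_empty.2 <| Set.not_nonempty_iff_eq_empty.1 fun h => hg (hα g h)

lemma not_smul_subset (hα : IsEdgeSet G α) (hW : (W ∩ α).Nonempty) {g : G}
    (hg : g ∉ stabilizer G α) : ¬ g • W ⊆ α := fun hsub => by
  obtain ⟨w, hwW, hwα⟩ := hW
  exact hg (hα g ⟨g • w, hsub (Set.smul_mem_smul_set hwW), Set.smul_mem_smul_set hwα⟩)

lemma index_mul_sum_sep [Fintype G] (hα : IsEdgeSet G α) {X Z : Set E} (hXα : X ⊆ α)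
    (hX : stabilizer G α ≤ stabilizer G X) (hZα : Z ⊆ α) (hZ : sep X Z = 1) :
    (stabilizer G α).index * ∑ g : G, sep X (g • Z) = Nat.card G := by
  have hterm : ∀ g : G, sep X (g • Z) = if g ∈ stabilizer G α then 1 else 0 := by
    intro g
    split_ifs with hg
    · rw [sep_smul_of_mem_stabilizer (hX hg), hZ]
    · exact sep_eq_zero_of_disjoint
        ((hα.disjoint_smul hg).symm.mono (Set.smul_set_mono hZα) hXα)
  rw [Finset.sum_congr rfl fun g _ => hterm g, sum_ite_mem_subgroup, Nat.cast_id, Subgroup.index_mul_card]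

lemma card_le_index_mul_sum_sep_sub [Fintype G] (hα : IsEdgeSet G α) {Y : Set E}
    (hYα : Y ⊆ α) (hY : stabilizer G α ≤ stabilizer G Y) (hW : sep α W = 1)
    (hWY : Disjoint W Y) :
    (Nat.card G : ℤ) ≤ (stabilizer G α).index *
      ((∑ h : G, (sep α (h • W) : ℤ)) - ∑ h : G, (sep Y (h • W) : ℤ)) := by
  have hterm : ∀ h : G, (if h ∈ stabilizer G α then 1 else 0 : ℤ) ≤
      (sep α (h • W) : ℤ) - sep Y (h • W) := by
    intro h
    split_ifs with hh
    · rw [sep_smul_of_mem_stabilizer hh, sep_smul_of_mem_stabilizer (hY hh), hW,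
        sep_eq_zero_of_disjoint hWY]
      norm_num
    · have := sep_le_sep_of_subset hYα (hα.not_smul_subset (sep_eq_one_iff.1 hW).1 hh)
      omega
  have hsum := Finset.sum_le_sum fun h (_ : h ∈ Finset.univ) => hterm h
  rw [sum_ite_mem_subgroup, Finset.sum_sub_distrib] at hsum
  calc (Nat.card G : ℤ) = (stabilizer G α).index * Nat.card (stabilizer G α) := by
        exact_mod_cast (Subgroup.index_mul_card _).symm
    _ ≤ _ := mul_le_mul_of_nonneg_left hsum (Int.natCast_nonneg _)

end IsEdgeSet

end

/-- The two displayed consequences of Lemma 7.8: in the Setup (Section 7.2)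
with `G` finite and `Z ⊆ α` meeting both `A` and `x • β`, we have
`p·|A|_Z = |G|` and `q·(|x•β|_Z − |x•B|_Z) ≥ |G|`, where
`|X|_Z = Σ_{g ∈ G} |X|*_{g • Z}`. -/
theorem stmt_10 {G E : Type*} [Group G] [Fintype G] [MulAction G E]
    (α β : Set E)
    (hedgeα : ∀ y : G, (α ∩ y • α).Nonempty → y • α = α)
    (hedgeβ : ∀ y : G, (β ∩ y • β).Nonempty → y • β = β)
    (P Q : Subgroup G)
    (hP : P = MulAction.stabilizer G α)
    (hQ : Q = MulAction.stabilizer G β)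
    (x : G)
    (γ γ' A B : Set E)
    (hγ : γ = ⋃ g ∈ P, g • (α ∩ x • β))
    (hγ' : γ' = ⋃ g ∈ Q, g • (β ∩ x⁻¹ • α))
    (hA : A = α \ γ) (hB : B = β \ γ')
    (p q : ℕ) (hp : p = P.index) (hq : q = Q.index)
    (Z : Set E) (hZ : Z ⊆ α)
    (hZA : (Z ∩ A).Nonempty) (hZβ : (Z ∩ x • β).Nonempty) :
    p * (∑ g : G, sep A (g • Z)) = Fintype.card G ∧
    (q : ℤ) * ((∑ g : G, (sep (x • β) (g • Z) : ℤ)) -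
        (∑ g : G, (sep (x • B) (g • Z) : ℤ))) ≥ (Fintype.card G : ℤ) := by
  subst hP hQ hγ hγ' hA hB hp hq
  obtain ⟨z₁, hz₁Z, hz₁α, hz₁γ⟩ := hZA
  obtain ⟨z₀, hz₀Z, hz₀β⟩ := hZβ
  have hγ_sub : α ∩ x • β ⊆ ⋃ g ∈ MulAction.stabilizer G α, g • (α ∩ x • β) := by
    simpa using Set.subset_biUnion_of_mem (u := fun g : G => g • (α ∩ x • β))
      (one_mem (MulAction.stabilizer G α))
  have hγ'_sub : β ∩ x⁻¹ • α ⊆ ⋃ g ∈ MulAction.stabilizer G β, g • (β ∩ x⁻¹ • α) := by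
    simpa using Set.subset_biUnion_of_mem (u := fun g : G => g • (β ∩ x⁻¹ • α))
      (one_mem (MulAction.stabilizer G β))
  have hz₁β : x⁻¹ • z₁ ∉ β := fun h =>
    hz₁γ (hγ_sub ⟨hz₁α, Set.mem_smul_set_iff_inv_smul_mem.2 h⟩)
  rw [ge_iff_le, sum_sep_smul_eq_sum_sep_conj, sum_sep_smul_eq_sum_sep_conj,
    ← Nat.card_eq_fintype_card]
  refine ⟨IsEdgeSet.index_mul_sum_sep hedgeα Set.sdiff_subset
      (fun g hg => sdiff_mem_stabilizer hg (mem_stabilizer_biUnion_smul _ _ hg)) hZ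
      (sep_eq_one_iff.2 ⟨⟨z₁, hz₁Z, hz₁α, hz₁γ⟩,
        ⟨z₀, hz₀Z, fun h => h.2 (hγ_sub ⟨hZ hz₀Z, hz₀β⟩)⟩⟩),
    IsEdgeSet.card_le_index_mul_sum_sep_sub hedgeβ Set.sdiff_subset
      (fun g hg => sdiff_mem_stabilizer hg (mem_stabilizer_biUnion_smul _ _ hg))
      (sep_eq_one_iff.2 ⟨⟨x⁻¹ • z₀, Set.smul_mem_smul_set hz₀Z,
          Set.mem_smul_set_iff_inv_smul_mem.1 hz₀β⟩,
        ⟨x⁻¹ • z₁, Set.smul_mem_smul_set hz₁Z, hz₁β⟩⟩) ?_⟩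
  rw [Set.disjoint_left]
  rintro _ ⟨z, hzZ, rfl⟩ ⟨hzβ, hzγ'⟩
  exact hzγ' (hγ'_sub ⟨hzβ, Set.smul_mem_smul_set (hZ hzZ)⟩)
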